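/- arXiv:1305.2044 — 2 statements merged into one kernel-verified Lean document; each statement's English description precedes it below -/
import Mathlib

section
/- Let g ∈ H_n, let i ∈ {1,…,n}, and let [i] be the equivalence class of i under ∼_g. Let A ⊆ X_n be the union of all infinite orbits of g that are almost equal to X_{j,r}(g) ∪ X_{k,s}(g) for some j, k ∈ [i] and some r, s. Define g_i : X_n → X_n by x g_i = x g for x ∈ A and x g_i = x for x ∉ A. Then g_i is a permutation of X_n, g_i belongs to H_n, g_i commutes with g, and moreover t_j(g_i) = t_j(g) for all j ∈ [i] and t_j(g_i) = 0 for all j ∉ [i]. -/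
/-!
Because `g` is eventually the translation by `t`, the forward orbit of a point with infinite orbit
eventually runs up a ray `k` with `t k > 0` in steps of `|t k|`, and its backward orbit up a ray
with `t k < 0`; so every infinite orbit is almost equal to some `X_{j,r} ∪ X_{k,s}`. Consequently a
far-out point `(k, m)` with `t k ≠ 0` lies in `A` exactly when `k ∼ i`. Since `A` is a union of
`g`-orbits, `g` on `A` extended by the identity is a permutation commuting with `g`, and far out on
ray `k` it acts as `g` if `k ∼ i` and as the identity otherwise.
-/

namespace HoughtonPaper

/-- The set `X_n = {1,…,n} × ℕ` (rays indexed by `Fin n`). -/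
abbrev X (n : ℕ) := Fin n × ℕ

/-- `g` acts as the translation by `t i` on the ray `i` from the point `z` on. -/
def EvTransFrom {n : ℕ} (g : Equiv.Perm (X n)) (t : Fin n → ℤ) (z : ℕ) : Prop :=
  ∀ (i : Fin n) (m : ℕ), z ≤ m →
    (g (i, m)).1 = i ∧ ((g (i, m)).2 : ℤ) = (m : ℤ) + t i

/-- `g` is eventually a translation with translation vector `t`. -/
def EvTrans {n : ℕ} (g : Equiv.Perm (X n)) (t : Fin n → ℤ) : Prop :=
  ∃ z : ℕ, EvTransFrom g t z

/-- Membership in Houghton's group `H_n`. -/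
def InH {n : ℕ} (g : Equiv.Perm (X n)) : Prop :=
  ∃ t : Fin n → ℤ, EvTrans g t

/-- Support of a permutation. -/
def supp {α : Type*} (g : Equiv.Perm α) : Set α := {x | g x ≠ x}

/-- Membership in `FSym(X_n)`, the finitely supported permutations. -/
def InFSym {n : ℕ} (g : Equiv.Perm (X n)) : Prop := (supp g).Finite

/-- Two sets are almost equal if their symmetric difference is finite. -/
def AlmostEq {α : Type*} (A B : Set α) : Prop := (symmDiff A B).Finite

/-- The set `X_{i,r}(g) = {(i,m) : m ≡ r mod |t_i(g)|}`, for `t` the translation vector. -/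
def Xir {n : ℕ} (i : Fin n) (t : Fin n → ℤ) (r : ℕ) : Set (X n) :=
  {p : X n | p.1 = i ∧ p.2 % (t i).natAbs = r}

/-- Forward orbit `{(i,m)g^k : k ≥ 0}`. -/
def fwdOrbit {n : ℕ} (g : Equiv.Perm (X n)) (p : X n) : Set (X n) :=
  Set.range fun k : ℕ => (g ^ k) p

/-- The orbit `{x g^k : k ∈ ℤ}`. -/
def orbit {n : ℕ} (g : Equiv.Perm (X n)) (p : X n) : Set (X n) :=
  Set.range fun k : ℤ => (g ^ k) p

/-- `A` is an infinite orbit of `g`. -/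
def IsInfOrbit {n : ℕ} (g : Equiv.Perm (X n)) (A : Set (X n)) : Prop :=
  (∃ p : X n, A = orbit g p) ∧ A.Infinite

/-- The generating relation of `∼_g`: some infinite orbit of `g` is almost equal
to `X_{i,r}(g) ∪ X_{j,s}(g)`. -/
def BaseRel {n : ℕ} (g : Equiv.Perm (X n)) (t : Fin n → ℤ) (i j : Fin n) : Prop :=
  ∃ r s : ℕ, r < (t i).natAbs ∧ s < (t j).natAbs ∧
    ∃ A : Set (X n), IsInfOrbit g A ∧ AlmostEq A (Xir i t r ∪ Xir j t s)

/-- The equivalence relation `∼_g` on the rays, generated by `BaseRel`. -/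
def SimRel {n : ℕ} (g : Equiv.Perm (X n)) (t : Fin n → ℤ) : Fin n → Fin n → Prop :=
  Relation.EqvGen (BaseRel g t)

def genFun {n : ℕ} [NeZero n] (i : Fin n) : X n → X n :=
  fun p =>
    if p.1 = 0 then ((0 : Fin n), p.2 + 1)
    else if p.1 = i then (if p.2 = 0 then ((0 : Fin n), 0) else (i, p.2 - 1))
    else p

def genInvFun {n : ℕ} [NeZero n] (i : Fin n) : X n → X n :=
  fun p =>
    if p.1 = 0 then (if p.2 = 0 then (i, 0) else ((0 : Fin n), p.2 - 1))
    else if p.1 = i then (i, p.2 + 1)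
    else p

/-- The generator `g_i` of Houghton's group (ray `1` of the paper is ray `0` here). -/
def gen {n : ℕ} [NeZero n] (i : Fin n) (hi : i ≠ 0) : Equiv.Perm (X n) where
  toFun := genFun i
  invFun := genInvFun i
  left_inv := by
    rintro ⟨j, m⟩
    by_cases hj : j = 0
    · subst hj
      simp [genFun, genInvFun]
    · by_cases hji : j = i
      · subst hji
        rcases Nat.eq_zero_or_pos m with hm | hm
        · subst hm; simp [genFun, genInvFun, hi]
        · simp [genFun, genInvFun, hi, hm.ne', Nat.sub_add_cancel hm]
      · simp [genFun, genInvFun, hj, hji]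
  right_inv := by
    rintro ⟨j, m⟩
    by_cases hj : j = 0
    · subst hj
      rcases Nat.eq_zero_or_pos m with hm | hm
      · subst hm; simp [genFun, genInvFun, hi]
      · simp [genFun, genInvFun, hm.ne', hi.symm, Nat.sub_add_cancel hm]
    · by_cases hji : j = i
      · subst hji
        simp [genFun, genInvFun, hj]
      · simp [genFun, genInvFun, hj, hji]

/-- The transposition `τ` exchanging `(1,0)` and `(2,0)` (here `(0,0)` and `(1,0)`). -/
def tau (n : ℕ) [NeZero n] : Equiv.Perm (X n) :=
  Equiv.swap ((0 : Fin n), 0) ((1 : Fin n), 0)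

/-- Letters of the alphabet `{g_2,…,g_n}^{±1}`. -/
abbrev Letter (n : ℕ) [NeZero n] := {i : Fin n // i ≠ 0} × Bool

/-- Words over `{g_2,…,g_n}^{±1}`. -/
abbrev Word (n : ℕ) [NeZero n] := List (Letter n)

def evalLetter {n : ℕ} [NeZero n] (l : Letter n) : Equiv.Perm (X n) :=
  if l.2 then gen l.1.1 l.1.2 else (gen l.1.1 l.1.2)⁻¹

/-- The element of `Sym(X_n)` represented by a word. -/
def wordProd {n : ℕ} [NeZero n] (w : Word n) : Equiv.Perm (X n) :=
  (w.map evalLetter).prod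

end HoughtonPaper

open HoughtonPaper

namespace HoughtonPaper

open Equiv Equiv.Perm

section AlmostEq

variable {α : Type*} {A B C D T : Set α}

theorem AlmostEq.symm (h : AlmostEq A B) : AlmostEq B A := by
  rwa [AlmostEq, symmDiff_comm]

theorem AlmostEq.trans (h₁ : AlmostEq A B) (h₂ : AlmostEq B C) : AlmostEq A C :=
  Set.Finite.subset (Set.Finite.union h₁ h₂) (symmDiff_triangle A B C)

theorem AlmostEq.union (h₁ : AlmostEq A C) (h₂ : AlmostEq B D) : AlmostEq (A ∪ B) (C ∪ D) :=
  Set.Finite.subset (Set.Finite.union h₁ h₂) Set.union_symmDiff_union_subset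

theorem almostEq_of_subset (hAB : A ⊆ B) (hfin : (B \ A).Finite) : AlmostEq A B := by
  rwa [AlmostEq, Set.symmDiff_def, Set.sdiff_eq_empty.2 hAB, Set.empty_union]

theorem AlmostEq.exists_mem_of_infinite_subset (h : AlmostEq A B) (hT : T.Infinite)
    (hTA : T ⊆ A) : ∃ x ∈ T, x ∈ B := by
  by_contra! hTB
  refine hT (h.subset fun x hx => ?_)
  rw [Set.symmDiff_def]
  exact Or.inl ⟨hTA hx, hTB x hx⟩

end AlmostEq

theorem commute_ofSubtype_subtypePerm {α : Type*} {p : α → Prop} [DecidablePred p]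
    {g : Perm α} (h : ∀ x, p (g x) ↔ p x) : Commute (ofSubtype (g.subtypePerm h)) g := by
  refine Perm.ext fun x => ?_
  simp only [Perm.mul_apply]
  by_cases hx : p x
  · rw [ofSubtype_subtypePerm_of_mem h ((h x).2 hx), ofSubtype_subtypePerm_of_mem h hx]
  · rw [ofSubtype_subtypePerm_of_not_mem h (mt (h x).1 hx), ofSubtype_subtypePerm_of_not_mem h hx]

variable {n : ℕ}

theorem finite_setOf_snd_lt (m : ℕ) : {p : X n | p.2 < m}.Finite :=
  (Set.finite_univ.prod (Set.finite_Iio m)).subset fun _ hp => ⟨trivial, hp⟩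

section Orbit

variable {g : Perm (X n)} {x y : X n}

theorem mem_orbit_iff : y ∈ orbit g x ↔ g.SameCycle x y := Iff.rfl

theorem mem_orbit_self : x ∈ orbit g x := SameCycle.refl g x

theorem apply_mem_orbit_iff : g y ∈ orbit g x ↔ y ∈ orbit g x := sameCycle_apply_right

theorem orbit_inv : orbit g⁻¹ x = orbit g x := Set.ext fun _ => sameCycle_inv

theorem orbit_eq_of_mem (h : y ∈ orbit g x) : orbit g y = orbit g x :=
  Set.ext fun _ => ⟨(mem_orbit_iff.1 h).trans, (mem_orbit_iff.1 h).symm.trans⟩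

theorem orbit_finite_of_zpow_apply_eq_self {c : ℤ} (hc : 0 < c) (hx : (g ^ c) x = x) :
    (orbit g x).Finite := by
  refine ((Set.finite_Ico 0 c).image fun k => (g ^ k) x).subset ?_
  rintro _ ⟨k, rfl⟩
  refine ⟨k % c, ⟨Int.emod_nonneg k hc.ne', Int.emod_lt_of_pos k hc⟩, ?_⟩
  have hfix : Function.IsFixedPt (g ^ c) x := hx
  calc (g ^ (k % c)) x = (g ^ (k % c)) (((g ^ c) ^ (k / c)) x) := by
        rw [hfix.perm_zpow (k / c)]
    _ = (g ^ k) x := by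
        rw [← Perm.mul_apply, ← zpow_mul, ← zpow_add, Int.emod_add_mul_ediv k c]

theorem zpow_apply_injective_of_infinite (hx : (orbit g x).Infinite) :
    Function.Injective fun k : ℤ => (g ^ k) x := by
  intro a b hab
  by_contra hne
  wlog hlt : a < b generalizing a b
  · exact this hab.symm (Ne.symm hne) (lt_of_le_of_ne (not_lt.1 hlt) (Ne.symm hne))
  refine hx (orbit_finite_of_zpow_apply_eq_self (sub_pos.2 hlt) ((g ^ a).injective ?_))
  rw [← Perm.mul_apply, ← zpow_add, add_sub_cancel]
  exact hab.symm

theorem pow_apply_injective_of_infinite (hx : (orbit g x).Infinite) :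
    Function.Injective fun k : ℕ => (g ^ k) x := fun a b hab =>
  Nat.cast_injective (zpow_apply_injective_of_infinite hx (by simpa using hab))

/-- Outside the two tails an orbit has only the points `g ^ c x` with `-K' < c < K`. -/
theorem orbit_almostEq_tails (g : Perm (X n)) (x : X n) (K K' : ℕ) :
    AlmostEq (orbit g x)
      (Set.range (fun p : ℕ => (g ^ (p + K)) x) ∪ Set.range (fun p : ℕ => (g⁻¹ ^ (p + K')) x)) := by
  have hneg : ∀ p : ℕ, (g⁻¹ ^ p) x = (g ^ (-(p : ℤ))) x := fun p => by
    rw [zpow_neg, zpow_natCast, inv_pow]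
  refine (almostEq_of_subset ?_ ?_).symm
  · rintro _ (⟨p, rfl⟩ | ⟨p, rfl⟩)
    · exact ⟨((p + K : ℕ) : ℤ), by simp only [zpow_natCast]⟩
    · exact ⟨-((p + K' : ℕ) : ℤ), (hneg _).symm⟩
  refine ((Set.finite_Ioo (-(K' : ℤ)) K).image fun c => (g ^ c) x).subset ?_
  rintro _ ⟨⟨c, rfl⟩, hc⟩
  refine ⟨c, ⟨?_, ?_⟩, rfl⟩
  · by_contra! hle
    refine hc (Or.inr ⟨(-c - K').toNat, ?_⟩)
    simp only [hneg]
    congr 2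
    omega
  · by_contra! hle
    refine hc (Or.inl ⟨(c - K).toNat, ?_⟩)
    simp only [← zpow_natCast]
    congr 2
    omega

end Orbit

theorem Xir_neg (k : Fin n) (t : Fin n → ℤ) (r : ℕ) : Xir k (-t) r = Xir k t r := by
  simp [Xir]

theorem almostEq_range_Xir (k : Fin n) (t : Fin n → ℤ) (m : ℕ) :
    AlmostEq (Set.range fun p : ℕ => ((k, m + p * (t k).natAbs) : X n))
      (Xir k t (m % (t k).natAbs)) := by
  refine almostEq_of_subset ?_ ((finite_setOf_snd_lt m).subset ?_)
  · rintro _ ⟨p, rfl⟩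
    exact ⟨rfl, Nat.add_mul_mod_self_right m p _⟩
  · rintro ⟨k', m'⟩ ⟨⟨rfl, hmod⟩, hnot⟩
    show m' < m
    by_contra! hle
    refine hnot ⟨(m' - m) / (t k').natAbs, ?_⟩
    have hdvd : (t k').natAbs ∣ m' - m := (Nat.modEq_iff_dvd' hle).1 hmod.symm
    dsimp only
    rw [Nat.div_mul_cancel hdvd]
    congr 1
    omega

theorem infinite_range_ray (k : Fin n) (m : ℕ) {d : ℕ} (hd : 0 < d) :
    (Set.range fun p : ℕ => ((k, m + p * d) : X n)).Infinite :=
  Set.infinite_range_of_injective fun a b hab =>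
    Nat.eq_of_mul_eq_mul_right hd (by simpa using hab)

section Translation

variable {g e : Perm (X n)} {t : Fin n → ℤ} {z : ℕ} {k : Fin n} {m : ℕ}

theorem EvTransFrom.mono (hz : EvTransFrom g t z) {z' : ℕ} (h : z ≤ z') : EvTransFrom g t z' :=
  fun k m hm => hz k m (h.trans hm)

theorem EvTransFrom.apply_of_eq_zero (hz : EvTransFrom g t z) (hk : t k = 0) (hm : z ≤ m) :
    g (k, m) = (k, m) := by
  obtain ⟨h₁, h₂⟩ := hz k m hm
  rw [hk, add_zero] at h₂
  exact Prod.ext h₁ (by exact_mod_cast h₂)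

theorem EvTransFrom.pow_apply_of_pos (hz : EvTransFrom g t z) (hk : 0 < t k) (hm : z ≤ m)
    (p : ℕ) : (g ^ p) (k, m) = (k, m + p * (t k).natAbs) := by
  induction p with
  | zero => simp
  | succ p ih =>
    obtain ⟨h₁, h₂⟩ := hz k _ (hm.trans (Nat.le_add_right m (p * (t k).natAbs)))
    rw [pow_succ', Perm.mul_apply, ih]
    refine Prod.ext h₁ ?_
    zify at h₂ ⊢
    rw [h₂, abs_of_pos hk]
    ring

theorem EvTransFrom.exists_inv (hz : EvTransFrom g t z) : ∃ z', EvTransFrom g⁻¹ (-t) z' := by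
  refine ⟨z + Finset.univ.sup fun k => (t k).natAbs, fun k m hm => ?_⟩
  have hk : (t k).natAbs ≤ Finset.univ.sup fun k => (t k).natAbs :=
    Finset.le_sup (f := fun k => (t k).natAbs) (Finset.mem_univ k)
  have hle : t k ≤ (t k).natAbs := Int.le_natAbs
  obtain ⟨m', hm'⟩ : ∃ m' : ℕ, (m' : ℤ) = m - t k :=
    ⟨(m - t k).toNat, Int.toNat_of_nonneg (by omega)⟩
  obtain ⟨h₁, h₂⟩ := hz k m' (by omega)
  have hg : g (k, m') = (k, m) := Prod.ext h₁ (by omega)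
  rw [← hg, Perm.inv_def, Equiv.symm_apply_apply]
  exact ⟨rfl, by simpa [sub_eq_add_neg] using hm'⟩

theorem EvTrans.exists_evTransFrom_inv (hg : EvTrans g t) :
    ∃ z, EvTransFrom g t z ∧ EvTransFrom g⁻¹ (-t) z := by
  obtain ⟨z, hz⟩ := hg
  obtain ⟨z', hz'⟩ := hz.exists_inv
  exact ⟨max z z', hz.mono (le_max_left z z'), hz'.mono (le_max_right z z')⟩

theorem EvTransFrom.exists_pow_apply_eq_of_infinite (hz : EvTransFrom g t z) {x : X n}
    (hx : (orbit g x).Infinite) :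
    ∃ (K : ℕ) (k : Fin n) (m : ℕ), 0 < t k ∧ z ≤ m ∧ (g ^ K) x = (k, m) := by
  classical
  have hinj := pow_apply_injective_of_infinite hx
  obtain ⟨q₀, hq₀⟩ := ((finite_setOf_snd_lt z).preimage hinj.injOn).bddAbove
  -- The lowest point of the forward orbit after its last visit below height `z` lies on a ray
  -- with `t k > 0`: on a ray with `t k < 0` the orbit would go lower, on one with `t k = 0` stop.
  have hex : ∃ h, ∃ q, q₀ < q ∧ ((g ^ q) x).2 = h := ⟨_, q₀ + 1, q₀.lt_succ_self, rfl⟩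
  obtain ⟨q, hq, hmin⟩ := Nat.find_spec hex
  obtain ⟨⟨k, m⟩, hy⟩ : ∃ y, (g ^ q) x = y := ⟨_, rfl⟩
  have hzm : z ≤ m := by
    by_contra! hlt
    have := hq₀ (show ((g ^ q) x).2 < z by rw [hy]; exact hlt)
    omega
  have hnext : (g ^ (q + 1)) x = g (k, m) := by rw [pow_succ', Perm.mul_apply, hy]
  refine ⟨q, k, m, ?_, hzm, hy⟩
  rcases lt_trichotomy (t k) 0 with hneg | hzero | hpos
  · have hlow := Nat.find_min' hex ⟨q + 1, by omega, rfl⟩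
    obtain ⟨-, h₂⟩ := hz k m hzm
    rw [← hmin, hy, hnext] at hlow
    omega
  · have := hinj (hnext.trans ((hz.apply_of_eq_zero hzero hzm).trans hy.symm))
    omega
  · exact hpos

theorem EvTransFrom.exists_almostEq_pow_tail (hz : EvTransFrom g t z) {x : X n}
    (hx : (orbit g x).Infinite) :
    ∃ (K : ℕ) (k : Fin n) (r : ℕ), r < (t k).natAbs ∧
      AlmostEq (Set.range fun p : ℕ => (g ^ (p + K)) x) (Xir k t r) := by
  obtain ⟨K, k, m, hk, hm, hK⟩ := hz.exists_pow_apply_eq_of_infinite hx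
  refine ⟨K, k, m % (t k).natAbs, Nat.mod_lt _ (Int.natAbs_pos.2 hk.ne'), ?_⟩
  have htail : (fun p : ℕ => (g ^ (p + K)) x) = fun p => ((k, m + p * (t k).natAbs) : X n) := by
    funext p
    rw [pow_add, Perm.mul_apply, hK, hz.pow_apply_of_pos hk hm]
  rw [htail]
  exact almostEq_range_Xir k t m

theorem EvTrans.orbit_almostEq_Xir_union (hg : EvTrans g t) {x : X n}
    (hx : (orbit g x).Infinite) :
    ∃ (j k : Fin n) (r s : ℕ), r < (t j).natAbs ∧ s < (t k).natAbs ∧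
      AlmostEq (orbit g x) (Xir j t r ∪ Xir k t s) := by
  obtain ⟨z, hz, hz'⟩ := hg.exists_evTransFrom_inv
  obtain ⟨K, j, r, hr, hfwd⟩ := hz.exists_almostEq_pow_tail hx
  obtain ⟨K', k, s, hs, hbwd⟩ := hz'.exists_almostEq_pow_tail (x := x) (orbit_inv ▸ hx)
  rw [Xir_neg] at hbwd
  exact ⟨j, k, r, s, hr, by simpa using hs, (orbit_almostEq_tails g x K K').trans (hfwd.union hbwd)⟩

theorem range_ray_subset_orbit (hz : EvTransFrom g t z) (hz' : EvTransFrom g⁻¹ (-t) z)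
    (hk : t k ≠ 0) (hm : z ≤ m) :
    Set.range (fun p : ℕ => ((k, m + p * (t k).natAbs) : X n)) ⊆ orbit g (k, m) := by
  rintro _ ⟨p, rfl⟩
  rcases hk.lt_or_gt with hneg | hpos
  · rw [← orbit_inv]
    refine ⟨p, ?_⟩
    simpa using hz'.pow_apply_of_pos (k := k) (by simpa using hneg) hm p
  · exact ⟨p, by simpa using hz.pow_apply_of_pos hpos hm p⟩

theorem orbit_ray_infinite (hz : EvTransFrom g t z) (hz' : EvTransFrom g⁻¹ (-t) z)
    (hk : t k ≠ 0) (hm : z ≤ m) : (orbit g (k, m)).Infinite :=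
  (infinite_range_ray k m (Int.natAbs_pos.2 hk)).mono (range_ray_subset_orbit hz hz' hk hm)

theorem eq_or_eq_of_orbit_ray_almostEq (hz : EvTransFrom g t z)
    (hz' : EvTransFrom g⁻¹ (-t) z) (hk : t k ≠ 0) (hm : z ≤ m) {j₁ j₂ : Fin n} {r s : ℕ}
    (h : AlmostEq (orbit g (k, m)) (Xir j₁ t r ∪ Xir j₂ t s)) : k = j₁ ∨ k = j₂ := by
  obtain ⟨_, ⟨p, rfl⟩, hp⟩ := h.exists_mem_of_infinite_subset
    (infinite_range_ray k m (Int.natAbs_pos.2 hk)) (range_ray_subset_orbit hz hz' hk hm)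
  exact hp.imp And.left And.left

theorem EvTransFrom.restrict {s : Set (X n)} {P : Fin n → Prop} [DecidablePred P]
    (hz : EvTransFrom g t z) (he_mem : ∀ p ∈ s, e p = g p) (he_not : ∀ p ∉ s, e p = p)
    (hs : ∀ k m, t k ≠ 0 → z ≤ m → ((k, m) ∈ s ↔ P k)) :
    EvTransFrom e (fun k => if P k then t k else 0) z := by
  intro k m hm
  by_cases hk : t k = 0
  · have hfix : e (k, m) = (k, m) := by
      by_cases hp : (k, m) ∈ s
      · rw [he_mem _ hp, hz.apply_of_eq_zero hk hm]
      · exact he_not _ hp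
    simp [hfix, hk]
  · by_cases hP : P k
    · dsimp only
      rw [he_mem _ ((hs k m hk hm).2 hP), if_pos hP]
      exact hz k m hm
    · dsimp only
      rw [he_not _ (mt (hs k m hk hm).1 hP), if_neg hP]
      simp

end Translation

/-- The set `A` of the theorem. -/
def classOrbits (g : Perm (X n)) (t : Fin n → ℤ) (i : Fin n) : Set (X n) :=
  {p : X n | ∃ B : Set (X n), IsInfOrbit g B ∧ p ∈ B ∧
    ∃ j k : Fin n, SimRel g t i j ∧ SimRel g t i k ∧
      ∃ r s : ℕ, r < (t j).natAbs ∧ s < (t k).natAbs ∧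
        AlmostEq B (Xir j t r ∪ Xir k t s)}

section ClassOrbits

variable {g : Perm (X n)} {t : Fin n → ℤ} {i : Fin n}

theorem apply_mem_classOrbits_iff (p : X n) :
    g p ∈ classOrbits g t i ↔ p ∈ classOrbits g t i :=
  exists_congr fun _ => and_congr_right fun ⟨⟨_, hB⟩, _⟩ =>
    and_congr_left' (hB ▸ apply_mem_orbit_iff)

theorem ray_mem_classOrbits_iff {z : ℕ} (hz : EvTransFrom g t z)
    (hz' : EvTransFrom g⁻¹ (-t) z) {k : Fin n} {m : ℕ} (hk : t k ≠ 0) (hm : z ≤ m) :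
    (k, m) ∈ classOrbits g t i ↔ SimRel g t i k := by
  constructor
  · rintro ⟨_, ⟨⟨q, rfl⟩, -⟩, hkm, j₁, j₂, h₁, h₂, r, s, -, -, hB⟩
    rw [← orbit_eq_of_mem hkm] at hB
    rcases eq_or_eq_of_orbit_ray_almostEq hz hz' hk hm hB with rfl | rfl
    exacts [h₁, h₂]
  · intro hik
    have hinf := orbit_ray_infinite hz hz' hk hm
    obtain ⟨j₁, j₂, r, s, hr, hs, hB⟩ := EvTrans.orbit_almostEq_Xir_union ⟨z, hz⟩ hinf
    have h₁₂ : SimRel g t j₁ j₂ := .rel _ _ ⟨r, s, hr, hs, _, ⟨⟨_, rfl⟩, hinf⟩, hB⟩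
    obtain ⟨h₁, h₂⟩ : SimRel g t i j₁ ∧ SimRel g t i j₂ := by
      rcases eq_or_eq_of_orbit_ray_almostEq hz hz' hk hm hB with rfl | rfl
      exacts [⟨hik, .trans _ _ _ hik h₁₂⟩, ⟨.trans _ _ _ hik (.symm _ _ h₁₂), hik⟩]
    exact ⟨_, ⟨⟨_, rfl⟩, hinf⟩, mem_orbit_self, j₁, j₂, h₁, h₂, r, s, hr, hs, hB⟩

end ClassOrbits

end HoughtonPaper

theorem statement12_general (n : ℕ) (g : Equiv.Perm (X n)) (t : Fin n → ℤ)
    (hg : EvTrans g t) (i : Fin n) (A : Set (X n))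
    (hA : A = {p : X n | ∃ B : Set (X n), IsInfOrbit g B ∧ p ∈ B ∧
      ∃ j k : Fin n, SimRel g t i j ∧ SimRel g t i k ∧
        ∃ r s : ℕ, r < (t j).natAbs ∧ s < (t k).natAbs ∧
          AlmostEq B (Xir j t r ∪ Xir k t s)}) :
    ∃ e : Equiv.Perm (X n), (∀ p ∈ A, e p = g p) ∧ (∀ p ∉ A, e p = p) ∧
      Commute e g ∧
      ∃ t' : Fin n → ℤ, EvTrans e t' ∧
        (∀ j : Fin n, SimRel g t i j → t' j = t j) ∧
        (∀ j : Fin n, ¬ SimRel g t i j → t' j = 0) := by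
  classical
  obtain rfl : A = classOrbits g t i := hA
  obtain ⟨z, hz, hz'⟩ := hg.exists_evTransFrom_inv
  have hinv : ∀ p, g p ∈ classOrbits g t i ↔ p ∈ classOrbits g t i := apply_mem_classOrbits_iff
  have he_mem : ∀ p ∈ classOrbits g t i, Equiv.Perm.ofSubtype (g.subtypePerm hinv) p = g p :=
    fun _ => Equiv.Perm.ofSubtype_subtypePerm_of_mem hinv
  have he_not : ∀ p ∉ classOrbits g t i, Equiv.Perm.ofSubtype (g.subtypePerm hinv) p = p :=
    fun _ => Equiv.Perm.ofSubtype_subtypePerm_of_not_mem hinv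
  refine ⟨_, he_mem, he_not, commute_ofSubtype_subtypePerm hinv,
    fun j => if SimRel g t i j then t j else 0,
    ⟨z, hz.restrict he_mem he_not fun k m hk hm => ray_mem_classOrbits_iff hz hz' hk hm⟩,
    fun j h => if_pos h, fun j h => if_neg h⟩

theorem statement12 (n : ℕ) (hn : 2 ≤ n) (g : Equiv.Perm (X n)) (t : Fin n → ℤ)
    (hg : EvTrans g t) (i : Fin n) (A : Set (X n))
    (hA : A = {p : X n | ∃ B : Set (X n), IsInfOrbit g B ∧ p ∈ B ∧
      ∃ j k : Fin n, SimRel g t i j ∧ SimRel g t i k ∧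
        ∃ r s : ℕ, r < (t j).natAbs ∧ s < (t k).natAbs ∧
          AlmostEq B (Xir j t r ∪ Xir k t s)}) :
    ∃ e : Equiv.Perm (X n), (∀ p ∈ A, e p = g p) ∧ (∀ p ∉ A, e p = p) ∧
      Commute e g ∧
      ∃ t' : Fin n → ℤ, EvTrans e t' ∧
        (∀ j : Fin n, SimRel g t i j → t' j = t j) ∧
        (∀ j : Fin n, ¬ SimRel g t i j → t' j = 0) :=
  statement12_general n g t hg i A hA
end

section
/- Let n ≥ 3. Houghton's group H_n, defined as the set of permutations of X_n that are eventually translations on each ray, equals the subgroup of Sym(X_n) generated by the permutations g_2,…,g_n. -/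
open HoughtonPaper

/-!
If `g` translates ray `i` by `t i` from height `z` on, then `g` maps the `n * z` points below
height `z` bijectively onto the `∑ i, (z + t i)` points below height `z + t i` on ray `i`, so
`∑ i, t i = 0`. Multiplying `g` by the power `g_j ^ t j` for each ray `j ≠ 0` therefore leaves a
permutation with zero translation vector, i.e. a finitary one. For `n ≥ 3` the commutator
`⁅g_i⁻¹, g_j⁆` of two distinct generators is the transposition of `(0, 0)` and `(i, 0)`;
conjugating it by powers of the generators gives the transpositions of neighbours along every
ray, hence all transpositions, hence every finitary permutation.
-/

namespace HoughtonPaper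

open Equiv Equiv.Perm

section EvTrans

variable {n : ℕ} {g h : Perm (X n)} {t s : Fin n → ℤ} {z z' : ℕ}

lemma EvTransFrom.apply_eq (hg : EvTransFrom g t z) {i : Fin n} {m k : ℕ} (hm : z ≤ m)
    (hk : (k : ℤ) = m + t i) : g (i, m) = (i, k) := by
  obtain ⟨h1, h2⟩ := hg i m hm
  exact Prod.ext h1 (by omega)

lemma natAbs_le_sum_natAbs (t : Fin n → ℤ) (i : Fin n) : (t i).natAbs ≤ ∑ j, (t j).natAbs :=
  Finset.single_le_sum (f := fun j => (t j).natAbs) (fun _ _ => Nat.zero_le _) (Finset.mem_univ i)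

lemma EvTransFrom.mul (hg : EvTransFrom g t z) (hh : EvTransFrom h s z') :
    EvTransFrom (g * h) (t + s) (z + z' + ∑ i, (s i).natAbs) := by
  intro i m hm
  have := natAbs_le_sum_natAbs s i
  obtain ⟨k, hk⟩ : ∃ k : ℕ, (k : ℤ) = m + s i := ⟨(m + s i).toNat, by omega⟩
  obtain ⟨h1, h2⟩ := hg i k (by omega)
  rw [Perm.mul_apply, hh.apply_eq (by omega) hk]
  exact ⟨h1, by rw [h2, hk, Pi.add_apply]; ring⟩

lemma EvTransFrom.inv (hg : EvTransFrom g t z) :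
    EvTransFrom g⁻¹ (-t) (z + ∑ i, (t i).natAbs) := by
  intro i m hm
  have := natAbs_le_sum_natAbs t i
  obtain ⟨k, hk⟩ : ∃ k : ℕ, (k : ℤ) = m - t i := ⟨(m - t i).toNat, by omega⟩
  have hinv : g⁻¹ (i, m) = (i, k) :=
    Perm.inv_eq_iff_eq.mpr (hg.apply_eq (by omega) (by omega)).symm
  rw [hinv]
  exact ⟨rfl, by rw [hk, Pi.neg_apply]; ring⟩

lemma EvTransFrom.finite_compl_fixedBy (hg : EvTransFrom g 0 z) :
    (MulAction.fixedBy (X n) g)ᶜ.Finite := by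
  refine (Set.finite_univ.prod (Set.finite_lt_nat z)).subset ?_
  rintro ⟨i, m⟩ hm
  exact ⟨trivial, show m < z from not_le.mp fun hzm => hm (hg.apply_eq hzm (by simp))⟩

lemma card_subtype_snd_lt {ι : Type*} [Fintype ι] (f : ι → ℕ) :
    Nat.card {p : ι × ℕ // p.2 < f p.1} = ∑ i, f i := by
  rw [Nat.card_congr (subtypeProdEquivSigmaSubtype fun i m => m < f i), Nat.card_sigma]
  simp_rw [← Nat.card_congr Fin.equivSubtype, Nat.card_fin]

lemma EvTransFrom.sum_eq_zero (hg : EvTransFrom g t z) : ∑ i, t i = 0 := by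
  set f : Fin n → ℕ := fun i => (z + t i).toNat
  have hf : ∀ i, (f i : ℤ) = z + t i := fun i =>
    Int.toNat_of_nonneg (by have := (hg i z le_rfl).2; omega)
  have hhigh : g '' {p | z ≤ p.2} = {p | f p.1 ≤ p.2} := by
    ext ⟨i, m⟩
    constructor
    · rintro ⟨⟨j, k⟩, (hk : z ≤ k), he⟩
      obtain ⟨h1, h2⟩ := hg j k hk
      rw [he] at h1 h2
      obtain rfl : i = j := h1
      simp only at h2
      have := hf i
      show f i ≤ m
      omega
    · intro (hm : f i ≤ m)
      have := hf i
      obtain ⟨k, hk⟩ : ∃ k : ℕ, (k : ℤ) = m - t i := ⟨(m - t i).toNat, by omega⟩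
      have hzk : z ≤ k := by omega
      exact ⟨(i, k), hzk, hg.apply_eq hzk (by omega)⟩
  have hlow : g '' {p | p.2 < z} = {p | p.2 < f p.1} := by
    have hcompl : {p : X n | p.2 < z} = {p | z ≤ p.2}ᶜ := by ext; simp
    rw [hcompl, Set.image_compl_eq g.bijective, hhigh]
    ext; simp
  have hcard := Nat.card_image_of_injective g.injective {p : X n | p.2 < z}
  rw [hlow] at hcard
  have hsum := congrArg (Nat.cast : ℕ → ℤ)
    ((card_subtype_snd_lt f).symm.trans (hcard.trans (card_subtype_snd_lt fun _ => z)))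
  push_cast [hf, Finset.sum_add_distrib] at hsum
  linarith

lemma EvTransFrom.eq_zero_of_forall_ne_zero [NeZero n] (hg : EvTransFrom g t z)
    (ht : ∀ i, i ≠ 0 → t i = 0) : t = 0 := by
  have h0 : t 0 = 0 := by
    rw [← hg.sum_eq_zero, Finset.sum_eq_single 0 (fun i _ hi => ht i hi) (by simp)]
  funext i
  by_cases hi : i = 0
  · subst hi; exact h0
  · exact ht i hi

lemma EvTrans.one : EvTrans (1 : Perm (X n)) 0 := ⟨0, fun i m _ => by simp⟩

lemma EvTrans.mul : EvTrans g t → EvTrans h s → EvTrans (g * h) (t + s)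
  | ⟨_, hg⟩, ⟨_, hh⟩ => ⟨_, hg.mul hh⟩

lemma EvTrans.inv : EvTrans g t → EvTrans g⁻¹ (-t)
  | ⟨_, hg⟩ => ⟨_, hg.inv⟩

lemma EvTrans.zpow (hg : EvTrans g t) (k : ℤ) : EvTrans (g ^ k) (k • t) := by
  induction k using Int.induction_on with
  | zero => rw [zpow_zero, zero_smul]; exact EvTrans.one
  | succ k ih => rw [zpow_add_one, add_smul, one_smul]; exact ih.mul hg
  | pred k ih => rw [zpow_sub_one, sub_smul, one_smul, sub_eq_add_neg]; exact ih.mul hg.inv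

end EvTrans

def houghton (n : ℕ) : Subgroup (Perm (X n)) where
  carrier := {g | InH g}
  one_mem' := ⟨0, EvTrans.one⟩
  mul_mem' := fun ⟨t, ht⟩ ⟨s, hs⟩ => ⟨t + s, ht.mul hs⟩
  inv_mem' := fun ⟨t, ht⟩ => ⟨-t, ht.inv⟩

section Generators

variable {n : ℕ} [NeZero n]

@[simp] lemma gen_apply_zero (i : Fin n) (hi : i ≠ 0) (m : ℕ) :
    gen i hi (0, m) = (0, m + 1) := by
  simp [gen, genFun]

@[simp] lemma gen_apply_self_zero (i : Fin n) (hi : i ≠ 0) : gen i hi (i, 0) = (0, 0) := by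
  simp [gen, genFun, hi]

@[simp] lemma gen_apply_self_succ (i : Fin n) (hi : i ≠ 0) (m : ℕ) :
    gen i hi (i, m + 1) = (i, m) := by
  simp [gen, genFun, hi]

lemma gen_apply_of_ne (i : Fin n) (hi : i ≠ 0) {j : Fin n} (hj0 : j ≠ 0) (hji : j ≠ i)
    (m : ℕ) : gen i hi (j, m) = (j, m) := by
  simp [gen, genFun, hj0, hji]

@[simp] lemma gen_inv_apply_self (i : Fin n) (hi : i ≠ 0) (m : ℕ) :
    (gen i hi)⁻¹ (i, m) = (i, m + 1) := by
  rw [Perm.inv_eq_iff_eq, gen_apply_self_succ]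

@[simp] lemma gen_inv_apply_zero_zero (i : Fin n) (hi : i ≠ 0) :
    (gen i hi)⁻¹ (0, 0) = (i, 0) := by
  rw [Perm.inv_eq_iff_eq, gen_apply_self_zero]

@[simp] lemma gen_inv_apply_zero_succ (i : Fin n) (hi : i ≠ 0) (m : ℕ) :
    (gen i hi)⁻¹ (0, m + 1) = (0, m) := by
  rw [Perm.inv_eq_iff_eq, gen_apply_zero]

lemma gen_inv_apply_of_ne (i : Fin n) (hi : i ≠ 0) {j : Fin n} (hj0 : j ≠ 0) (hji : j ≠ i)
    (m : ℕ) : (gen i hi)⁻¹ (j, m) = (j, m) := by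
  rw [Perm.inv_eq_iff_eq, gen_apply_of_ne i hi hj0 hji]

def genVec (i : Fin n) : Fin n → ℤ := Pi.single 0 1 - Pi.single i 1

lemma evTransFrom_gen (i : Fin n) (hi : i ≠ 0) : EvTransFrom (gen i hi) (genVec i) 1 := by
  rintro j (_ | m) hm
  · omega
  by_cases hj0 : j = 0
  · subst hj0; simp [genVec, Ne.symm hi]
  by_cases hji : j = i
  · subst hji; simp [genVec, hj0]
  · simp [gen_apply_of_ne i hi hj0 hji, genVec, hj0, hji]

lemma evTrans_gen (i : Fin n) (hi : i ≠ 0) : EvTrans (gen i hi) (genVec i) :=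
  ⟨1, evTransFrom_gen i hi⟩

def genSubgroup (n : ℕ) [NeZero n] : Subgroup (Perm (X n)) :=
  Subgroup.closure {h : Perm (X n) | ∃ (i : Fin n) (hi : i ≠ 0), h = gen i hi}

lemma gen_mem_genSubgroup (i : Fin n) (hi : i ≠ 0) : gen i hi ∈ genSubgroup n :=
  Subgroup.subset_closure ⟨i, hi, rfl⟩

lemma genSubgroup_le_houghton : genSubgroup n ≤ houghton n :=
  (Subgroup.closure_le _).mpr fun _ ⟨i, hi, he⟩ => he ▸ ⟨_, evTrans_gen i hi⟩

end Generators

section Transpositions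

lemma swap_apply_apply_mem {α : Type*} [DecidableEq α] {G : Subgroup (Perm α)} {σ : Perm α}
    (hσ : σ ∈ G) {a b : α} (hab : swap a b ∈ G) : swap (σ a) (σ b) ∈ G := by
  rw [swap_apply_apply]
  exact mul_mem (mul_mem hσ hab) (inv_mem hσ)

variable {n : ℕ} [NeZero n]

lemma swap_eq_commutator_gen {i j : Fin n} (hi : i ≠ 0) (hj : j ≠ 0) (hij : i ≠ j) :
    swap ((0 : Fin n), 0) (i, 0) = (gen i hi)⁻¹ * gen j hj * gen i hi * (gen j hj)⁻¹ := by
  refine Equiv.ext fun ⟨r, m⟩ => ?_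
  simp only [Perm.mul_apply]
  by_cases hr0 : r = 0 <;> by_cases hri : r = i <;> by_cases hrj : r = j <;> rcases m with _ | m <;>
    simp_all [gen_apply_of_ne, gen_inv_apply_of_ne, swap_apply_def, Ne.symm hij]

lemma swap_zero_mem_genSubgroup (hn : 3 ≤ n) (i : Fin n) :
    swap ((0 : Fin n), 0) (i, 0) ∈ genSubgroup n := by
  by_cases hi : i = 0
  · rw [hi, swap_self]
    exact one_mem _
  obtain ⟨j, hj0, hji⟩ := Fin.exists_ne_and_ne_of_two_lt 0 i (by omega)
  rw [swap_eq_commutator_gen hi hj0 (Ne.symm hji)]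
  have := gen_mem_genSubgroup i hi
  have := gen_mem_genSubgroup j hj0
  apply_rules [mul_mem, inv_mem]

lemma swap_succ_mem_genSubgroup (hn : 3 ≤ n) (i : Fin n) (m : ℕ) :
    swap (i, m) (i, m + 1) ∈ genSubgroup n := by
  by_cases hi : i = 0
  · subst hi
    obtain ⟨j, hj⟩ : ∃ j : Fin n, j ≠ 0 := ⟨⟨1, by omega⟩, by simp [Fin.ext_iff]⟩
    have hσ := gen_mem_genSubgroup j hj
    induction m with
    | zero => simpa [swap_comm] using swap_apply_apply_mem hσ (swap_zero_mem_genSubgroup hn j)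
    | succ m ih => simpa using swap_apply_apply_mem hσ ih
  · have hσ := inv_mem (gen_mem_genSubgroup i hi)
    induction m with
    | zero => simpa using swap_apply_apply_mem hσ (swap_zero_mem_genSubgroup hn i)
    | succ m ih => simpa using swap_apply_apply_mem hσ ih

lemma swap_mem_genSubgroup (hn : 3 ≤ n) (p q : X n) : swap p q ∈ genSubgroup n := by
  have hzero : ∀ p : X n, swap (0, 0) p ∈ genSubgroup n := by
    rintro ⟨i, m⟩
    induction m with
    | zero => exact swap_zero_mem_genSubgroup hn i
    | succ m ih => exact SubmonoidClass.swap_mem_trans _ ih (swap_succ_mem_genSubgroup hn i m)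
  exact SubmonoidClass.swap_mem_trans _ (swap_comm p _ ▸ hzero p) (hzero q)

lemma mem_genSubgroup_of_finite (hn : 3 ≤ n) {g : Perm (X n)}
    (hg : (MulAction.fixedBy (X n) g)ᶜ.Finite) : g ∈ genSubgroup n :=
  (Subgroup.closure_le _).mpr (by rintro _ ⟨p, q, -, rfl⟩; exact swap_mem_genSubgroup hn p q)
    (mem_closure_isSwap'.mpr hg)

end Transpositions

lemma mem_genSubgroup_of_evTrans_of_eq_zero_off {n : ℕ} [NeZero n] (hn : 3 ≤ n)
    {g : Perm (X n)} {t : Fin n → ℤ} (hg : EvTrans g t) (s : Finset (Fin n))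
    (ht : ∀ i ∉ s, i ≠ 0 → t i = 0) : g ∈ genSubgroup n := by
  induction s using Finset.induction_on generalizing g t with
  | empty =>
    obtain ⟨z, hg⟩ := hg
    obtain rfl := hg.eq_zero_of_forall_ne_zero fun i => ht i (Finset.notMem_empty i)
    exact mem_genSubgroup_of_finite hn hg.finite_compl_fixedBy
  | insert j s _ ih =>
    by_cases hj : j = 0
    · subst hj
      exact ih hg fun i hi hi0 => ht i (by simp [hi, hi0]) hi0
    have hgen := gen_mem_genSubgroup j hj
    have hred : g * gen j hj ^ t j ∈ genSubgroup n := by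
      refine ih (hg.mul ((evTrans_gen j hj).zpow (t j))) fun i hi hi0 => ?_
      by_cases hij : i = j
      · subst hij
        simp [genVec, hi0]
      · simp [genVec, hi0, hij, ht i (by simp [hij, hi]) hi0]
    simpa using mul_mem hred (inv_mem (zpow_mem hgen (t j)))

end HoughtonPaper

theorem statement19 (n : ℕ) [NeZero n] (hn : 3 ≤ n) (g : Equiv.Perm (X n)) :
    InH g ↔ g ∈ Subgroup.closure {h : Equiv.Perm (X n) |
      ∃ (i : Fin n) (hi : i ≠ 0), h = gen i hi} := by
  constructor
  · rintro ⟨t, ht⟩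
    exact mem_genSubgroup_of_evTrans_of_eq_zero_off hn ht Finset.univ (by simp)
  · exact fun hg => genSubgroup_le_houghton hg
end
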